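/- arXiv:2003.03802 — 4 statements merged into one kernel-verified Lean document; each statement's English description precedes it below -/
import Mathlib

section
/- For every q ∈ (0,1) and every x ∈ (0,1), the double series Σ_{n=1}^∞ Σ_{m=1}^∞ (4 q^{2nm}/n)·cos(2πnx) converges absolutely, and Σ_{n=1}^∞ Σ_{m=1}^∞ (4 q^{2nm}/n)·cos(2πnx) = −2·log|Θ_q(x)| + 2·log(q^{1/6}·η(q)) + 2·log(2·sin(πx)). -/
open Real Complex

/-- The Jacobi theta function
`Θ_q(u) = −2 q^{1/4} sin(πu) ∏_{k≥1} (1−q^{2k})(1−2cos(2πu)q^{2k}+q^{4k})` for `q ∈ (0,1)`. -/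
noncomputable def JacobiTheta' (q : ℝ) (u : ℂ) : ℂ :=
  (-2 : ℂ) * ((q ^ ((1 : ℝ) / 4) : ℝ) : ℂ) * Complex.sin (Real.pi * u) *
    ∏' k : ℕ, ((1 - (q : ℂ) ^ (2 * (k + 1))) *
      (1 - 2 * Complex.cos (2 * Real.pi * u) * (q : ℂ) ^ (2 * (k + 1)) + (q : ℂ) ^ (4 * (k + 1))))

/-- The Dedekind eta function `η(q) = q^{1/12} ∏_{k≥1} (1 − q^{2k})` for `q ∈ (0,1)`. -/
noncomputable def dedekindEta' (q : ℝ) : ℝ :=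
  q ^ ((1 : ℝ) / 12) * ∏' k : ℕ, (1 - q ^ (2 * (k + 1)))

/-!
Taking real parts in the Taylor series of `-log (1 - r e^{iθ})` gives
`∑ₙ (rⁿ / n) cos (nθ) = -½ log (1 - 2 r cos θ + r²)`. With `r = q^{2m}` this evaluates the inner
sum over `n` of the double series as `-2 log` of the `m`-th factor
`1 - 2 cos (2πx) q^{2m} + q^{4m}` of the product defining `Θ_q(x)`; absolute convergence lets us
sum over `m` afterwards, so the double series is `-2 log` of the product of these factors. The
remaining factors of `Θ_q(x)` are `-2 sin (πx)` and `q^{1/4} ∏ (1 - q^{2k}) = q^{1/6} η(q)`.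
-/

theorem normSq_one_sub_ofReal_mul_exp_mul_I (r θ : ℝ) :
    normSq (1 - r * exp (θ * I)) = 1 - 2 * r * Real.cos θ + r ^ 2 := by
  rw [exp_mul_I, ← ofReal_cos, ← ofReal_sin, normSq_apply]
  simp only [sub_re, one_re, mul_re, add_re, sub_im, one_im, mul_im, add_im, ofReal_re, ofReal_im,
    I_re, I_im]
  linear_combination r ^ 2 * Real.sin_sq_add_cos_sq θ

theorem one_sub_two_mul_mul_cos_add_sq_pos {r : ℝ} (hr : |r| < 1) (θ : ℝ) :
    0 < 1 - 2 * r * Real.cos θ + r ^ 2 := by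
  have hcos : r * Real.cos θ ≤ |r| := (le_abs_self _).trans <| by
    rw [abs_mul]; exact mul_le_of_le_one_right (abs_nonneg r) (abs_cos_le_one θ)
  nlinarith [sq_abs r]

theorem hasSum_pow_div_mul_cos {r : ℝ} (hr : |r| < 1) (θ : ℝ) :
    HasSum (fun n : ℕ => r ^ (n + 1) / (n + 1) * Real.cos ((n + 1) * θ))
      (-Real.log (1 - 2 * r * Real.cos θ + r ^ 2) / 2) := by
  set z : ℂ := r * exp (θ * I)
  have hz : ‖z‖ < 1 := by simpa [z, norm_exp_ofReal_mul_I] using hr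
  convert hasSum_re ((hasSum_nat_add_iff' 1).2 (hasSum_taylorSeries_neg_log hz)) using 1
  · ext n
    have hzpow : z ^ (n + 1) / (n + 1 : ℕ) =
        ((r ^ (n + 1) / (n + 1) : ℝ) : ℂ) * exp (((n + 1) * θ : ℝ) * I) := by
      rw [mul_pow, ← Complex.exp_nat_mul]
      push_cast
      ring_nf
    rw [hzpow, re_ofReal_mul, exp_ofReal_mul_I_re]
  · rw [← normSq_one_sub_ofReal_mul_exp_mul_I, normSq_eq_norm_sq, Real.log_pow]
    simp only [Finset.range_one, Finset.sum_singleton, pow_zero, CharP.cast_eq_zero, div_zero,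
      sub_zero, neg_re, log_re, z]
    ring

theorem abs_pow_lt_one {q : ℝ} (hq : |q| < 1) {n : ℕ} (hn : n ≠ 0) : |q ^ n| < 1 := by
  rw [abs_pow]
  exact pow_lt_one₀ (abs_nonneg q) hq hn

theorem hasProd_one_sub_pow_succ {r : ℝ} (hr : |r| < 1) :
    HasProd (fun k : ℕ => 1 - r ^ (k + 1)) (rexp (∑' k : ℕ, Real.log (1 - r ^ (k + 1)))) := by
  have hlog : Summable fun k : ℕ => Real.log (1 - r ^ (k + 1)) := by
    simpa [sub_eq_add_neg] using Real.summable_log_one_add_of_summable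
      ((summable_nat_add_iff 1).2 (summable_geometric_of_abs_lt_one hr)).neg
  refine Real.hasProd_of_hasSum_log (fun k => sub_pos.2 ?_) hlog.hasSum
  exact (le_abs_self _).trans_lt (abs_pow_lt_one hr k.succ_ne_zero)

noncomputable def logThetaSeriesTerm (q x : ℝ) (p : ℕ × ℕ) : ℝ :=
  4 * q ^ (2 * (p.1 + 1) * (p.2 + 1)) / (p.1 + 1) * Real.cos (2 * π * (p.1 + 1) * x)

noncomputable def thetaFactor (q x : ℝ) (k : ℕ) : ℝ :=
  1 - 2 * q ^ (2 * (k + 1)) * Real.cos (2 * π * x) + (q ^ (2 * (k + 1))) ^ 2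

section

variable {q : ℝ} (x : ℝ)

theorem abs_logThetaSeriesTerm_le (hq : |q| ≤ 1) (p : ℕ × ℕ) :
    |logThetaSeriesTerm q x p| ≤ 4 * (|q| ^ (p.1 + 1) * |q| ^ (p.2 + 1)) := by
  obtain ⟨n, m⟩ := p
  have hexp : (n + 1) + (m + 1) ≤ 2 * (n + 1) * (m + 1) := by nlinarith
  calc |logThetaSeriesTerm q x (n, m)|
      ≤ 4 * |q| ^ (2 * (n + 1) * (m + 1)) / (n + 1) := by
        rw [logThetaSeriesTerm, abs_mul, abs_div, abs_mul, abs_pow, abs_of_pos four_pos,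
          abs_of_pos (n.cast_add_one_pos (α := ℝ))]
        exact mul_le_of_le_one_right (by positivity) (abs_cos_le_one _)
    _ ≤ 4 * |q| ^ (2 * (n + 1) * (m + 1)) := div_le_self (by positivity) (by simp)
    _ ≤ 4 * |q| ^ ((n + 1) + (m + 1)) :=
        mul_le_mul_of_nonneg_left (pow_le_pow_of_le_one (abs_nonneg q) hq hexp) (by norm_num)
    _ = 4 * (|q| ^ (n + 1) * |q| ^ (m + 1)) := by rw [pow_add]

theorem summable_abs_logThetaSeriesTerm (hq : |q| < 1) :
    Summable fun p => |logThetaSeriesTerm q x p| := by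
  have hgeo : Summable fun n : ℕ => |q| ^ (n + 1) :=
    (summable_nat_add_iff 1).2 (summable_geometric_of_lt_one (abs_nonneg q) hq)
  exact .of_nonneg_of_le (fun _ => abs_nonneg _) (abs_logThetaSeriesTerm_le x hq.le)
    ((hgeo.mul_of_nonneg hgeo (fun _ => by positivity) (fun _ => by positivity)).mul_left 4)

theorem thetaFactor_pos (hq : |q| < 1) (k : ℕ) : 0 < thetaFactor q x k :=
  one_sub_two_mul_mul_cos_add_sq_pos (abs_pow_lt_one hq (by omega)) _

theorem hasSum_logThetaSeriesTerm_fst (hq : |q| < 1) (m : ℕ) :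
    HasSum (fun n => logThetaSeriesTerm q x (n, m)) (-2 * Real.log (thetaFactor q x m)) := by
  have h := (hasSum_pow_div_mul_cos (abs_pow_lt_one hq (n := 2 * (m + 1)) (by omega))
    (2 * π * x)).mul_left 4
  rw [← thetaFactor, show 4 * (-Real.log (thetaFactor q x m) / 2) =
    -2 * Real.log (thetaFactor q x m) by ring] at h
  refine h.congr_fun fun n => ?_
  simp only [logThetaSeriesTerm, ← pow_mul]
  ring_nf

theorem hasSum_log_thetaFactor (hq : |q| < 1) :
    HasSum (fun k => Real.log (thetaFactor q x k)) (-(∑' p, logThetaSeriesTerm q x p) / 2) := by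
  have hs := (summable_abs_logThetaSeriesTerm x hq).of_abs
  have h := ((Equiv.prodComm ℕ ℕ).summable_iff.2 hs).hasSum.prod_fiberwise
    (hasSum_logThetaSeriesTerm_fst x hq)
  simp only [Function.comp_apply, (Equiv.prodComm ℕ ℕ).tsum_eq] at h
  rw [show -(∑' p, logThetaSeriesTerm q x p) / 2 = -1 / 2 * ∑' p, logThetaSeriesTerm q x p by
    ring]
  exact (h.mul_left (-1 / 2)).congr_fun fun k => by ring

end

theorem jacobiTheta'_ofReal {q x P G : ℝ}
    (hP : HasProd (fun k : ℕ => 1 - q ^ (2 * (k + 1))) P) (hG : HasProd (thetaFactor q x) G) :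
    JacobiTheta' q x = ((-2 * q ^ ((1 : ℝ) / 4) * Real.sin (π * x) * (P * G) : ℝ) : ℂ) := by
  have h : HasProd (fun k : ℕ => (1 - (q : ℂ) ^ (2 * (k + 1))) *
      (1 - 2 * Complex.cos (2 * π * x) * (q : ℂ) ^ (2 * (k + 1)) + (q : ℂ) ^ (4 * (k + 1))))
      ((P * G : ℝ) : ℂ) := by
    convert (hP.mul hG).map ofRealHom.toMonoidHom continuous_ofReal using 1
    · ext k
      simp only [Function.comp_apply, RingHom.toMonoidHom_eq_coe, MonoidHom.coe_coe,
        ofRealHom_eq_coe]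
      push_cast [thetaFactor]
      ring
    · rfl
  rw [JacobiTheta', h.tprod_eq]
  push_cast
  ring

theorem rpow_one_sixth_mul_dedekindEta' {q P : ℝ} (hq : 0 ≤ q)
    (hP : HasProd (fun k : ℕ => 1 - q ^ (2 * (k + 1))) P) :
    q ^ ((1 : ℝ) / 6) * dedekindEta' q = q ^ ((1 : ℝ) / 4) * P := by
  rw [dedekindEta', hP.tprod_eq, ← mul_assoc, ← Real.rpow_add' hq (by norm_num)]
  norm_num

/-- The covariance identity of Lemma 2.1 (lem:field-covar):
`Σ_{n,m≥1} (4 q^{2nm}/n) cos(2πnx) = −2 log|Θ_q(x)| + 2 log(q^{1/6}η(q)) + 2 log(2 sin(πx))`,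
with the double series converging absolutely. -/
theorem double_sum_cos_eq_log_theta {q x : ℝ}
    (hq : q ∈ Set.Ioo (0 : ℝ) 1) (hx : x ∈ Set.Ioo (0 : ℝ) 1) :
    Summable (fun p : ℕ × ℕ =>
        |4 * q ^ (2 * (p.1 + 1) * (p.2 + 1)) / (p.1 + 1) * Real.cos (2 * π * (p.1 + 1) * x)|) ∧
      ∑' p : ℕ × ℕ,
          4 * q ^ (2 * (p.1 + 1) * (p.2 + 1)) / (p.1 + 1) * Real.cos (2 * π * (p.1 + 1) * x) =
        -2 * Real.log ‖JacobiTheta' q (x : ℂ)‖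
          + 2 * Real.log (q ^ ((1 : ℝ) / 6) * dedekindEta' q)
          + 2 * Real.log (2 * Real.sin (π * x)) := by
  obtain ⟨hq0, hq1⟩ := hq
  have hq : |q| < 1 := by rwa [abs_of_pos hq0]
  have hsin : 0 < Real.sin (π * x) :=
    Real.sin_pos_of_pos_of_lt_pi (by nlinarith [pi_pos, hx.1]) (by nlinarith [pi_pos, hx.2])
  refine ⟨summable_abs_logThetaSeriesTerm x hq,
    (?_ : ∑' p, logThetaSeriesTerm q x p = _)⟩
  have hP := hasProd_one_sub_pow_succ (abs_pow_lt_one hq two_ne_zero)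
  simp only [← pow_mul] at hP
  have hG := Real.hasProd_of_hasSum_log (thetaFactor_pos x hq) (hasSum_log_thetaFactor x hq)
  rw [jacobiTheta'_ofReal hP hG, rpow_one_sixth_mul_dedekindEta' hq0.le hP, norm_real,
    norm_eq_abs, Real.log_abs]
  simp only [one_div, neg_mul, log_neg_eq_log, ne_eq, mul_eq_zero, OfNat.ofNat_ne_zero,
    (rpow_pos_of_pos hq0 _).ne', or_self, hsin.ne', not_false_eq_true, Real.exp_ne_zero,
    Real.log_mul, Real.log_exp]
  ring
end

section
/- Let (α_{n,m})_{n,m≥1} and (β_{n,m})_{n,m≥1} be a jointly independent family of real random variables on a probability space (Ω, ℙ), each with the standard Gaussian law N(0,1). Then almost surely the following holds: for every x ∈ [0,1] and every q in the open unit disc 𝔻 ⊂ ℂ, the series F_x(q) := 2·Σ_{n,m≥1} (q^{nm}/√n)·(α_{n,m}·cos(2πnx) + β_{n,m}·sin(2πnx)) converges absolutely, and for every x ∈ [0,1] the function q ↦ F_x(q) is analytic on 𝔻. -/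
/-!
Each coefficient `2 (α cos + β sin) / √n` has modulus at most `2 (|α| + |β|)`. For fixed
`r < 1`, Tonelli gives `𝔼 ∑ (|α_{n,m}| + |β_{n,m}|) r^{nm} = 2 𝔼|N(0,1)| ∑ r^{nm} < ∞`, so almost
surely this majorant converges; by monotonicity in `r` countably many radii `r → 1` suffice.
The Weierstrass M-test on the discs `|q| < r` then gives absolute convergence and holomorphy
on `𝔻`.
-/

open Real Complex MeasureTheory ProbabilityTheory Metric
open scoped ENNReal

section PowerSeries

variable {ι : Type*}

theorem summable_mul_pow_of_le {a : ι → ℝ} (ha : ∀ i, 0 ≤ a i) {e : ι → ℕ} {r s : ℝ}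
    (hr : 0 ≤ r) (hrs : r ≤ s) (h : Summable fun i => a i * s ^ e i) :
    Summable fun i => a i * r ^ e i :=
  h.of_nonneg_of_le (fun i => mul_nonneg (ha i) (pow_nonneg hr _)) fun i => by
    gcongr; exact ha i

theorem summable_mul_pow_of_forall_nat {a : ι → ℝ} (ha : ∀ i, 0 ≤ a i) {e : ι → ℕ}
    (h : ∀ k : ℕ, Summable fun i => a i * (1 - 1 / (k + 1 : ℝ)) ^ e i)
    {r : ℝ} (hr0 : 0 ≤ r) (hr1 : r < 1) : Summable fun i => a i * r ^ e i := by
  obtain ⟨k, hk⟩ := exists_nat_one_div_lt (sub_pos.mpr hr1)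
  exact summable_mul_pow_of_le ha hr0 (by linarith) (h k)

theorem analyticOnNhd_tsum_mul_pow {c : ι → ℂ} {e : ι → ℕ}
    (hc : ∀ r, 0 ≤ r → r < 1 → Summable fun i => ‖c i‖ * r ^ e i) :
    AnalyticOnNhd ℂ (fun q => ∑' i, c i * q ^ e i) (ball 0 1) := by
  intro z hz
  rw [mem_ball_zero_iff] at hz
  set r := (1 + ‖z‖) / 2 with hr
  have hdiff : DifferentiableOn ℂ (fun q => ∑' i, c i * q ^ e i) (ball 0 r) := by
    refine differentiableOn_tsum_of_summable_norm (hc r (by positivity) (by linarith))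
      (fun i => (differentiable_id.pow _).const_mul _ |>.differentiableOn) isOpen_ball
      fun i w hw => ?_
    rw [norm_mul, norm_pow]
    gcongr
    exact (mem_ball_zero_iff.mp hw).le
  exact hdiff.analyticAt (isOpen_ball.mem_nhds (mem_ball_zero_iff.mpr (by linarith)))

end PowerSeries

section SummableMajorant

variable {Ω ι E : Type*} [MeasurableSpace Ω] {μ : Measure Ω} [Countable ι]
  [NormedAddCommGroup E] [MeasurableSpace E]

theorem ae_summable_norm_mul_of_lintegral_le [OpensMeasurableSpace E] {X : ι → Ω → E}
    (hX : ∀ i, AEMeasurable (X i) μ) {C : ℝ≥0∞} (hC : C ≠ ∞) (hXC : ∀ i, ∫⁻ ω, ‖X i ω‖ₑ ∂μ ≤ C)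
    {w : ι → ℝ} (hw0 : ∀ i, 0 ≤ w i) (hw : Summable w) :
    ∀ᵐ ω ∂μ, Summable fun i => ‖X i ω‖ * w i := by
  set F : ι → Ω → ℝ≥0∞ := fun i ω => ‖X i ω‖ₑ * ENNReal.ofReal (w i)
  have hF : ∀ i, AEMeasurable (F i) μ := fun i => (hX i).enorm.mul_const _
  have hFint : ∫⁻ ω, ∑' i, F i ω ∂μ ≠ ∞ := by
    refine ne_top_of_le_ne_top (ENNReal.mul_ne_top hC (ENNReal.ofReal_ne_top (r := ∑' i, w i))) ?_
    calc ∫⁻ ω, ∑' i, F i ω ∂μ = ∑' i, (∫⁻ ω, ‖X i ω‖ₑ ∂μ) * ENNReal.ofReal (w i) := by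
          rw [lintegral_tsum hF]
          exact tsum_congr fun i => lintegral_mul_const'' _ (hX i).enorm
      _ ≤ ∑' i, C * ENNReal.ofReal (w i) := by gcongr with i; exact hXC i
      _ = C * ENNReal.ofReal (∑' i, w i) := by
          rw [ENNReal.tsum_mul_left, ENNReal.ofReal_tsum_of_nonneg hw0 hw]
  filter_upwards [ae_lt_top' (AEMeasurable.tsum hF) hFint] with ω hω
  refine (ENNReal.summable_toReal hω.ne).congr fun i => ?_
  simp [F, ENNReal.toReal_ofReal (hw0 i)]

theorem ae_summable_norm_mul_of_map_eq {ν : Measure E} [NeZero ν] [BorelSpace E]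
    (hν : Integrable id ν) {X : ι → Ω → E} (hX : ∀ i, μ.map (X i) = ν)
    {w : ι → ℝ} (hw0 : ∀ i, 0 ≤ w i) (hw : Summable w) :
    ∀ᵐ ω ∂μ, Summable fun i => ‖X i ω‖ * w i := by
  have hXmeas : ∀ i, AEMeasurable (X i) μ := fun i =>
    aemeasurable_of_map_neZero (by rw [hX i]; infer_instance)
  refine ae_summable_norm_mul_of_lintegral_le hXmeas hν.2.ne (fun i => le_of_eq ?_) hw0 hw
  rw [← hX i, lintegral_map' (by fun_prop) (hXmeas i)]
  rfl

theorem ae_forall_summable_norm_mul_pow {ν : Measure E} [NeZero ν] [BorelSpace E]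
    (hν : Integrable id ν) {X : ι → Ω → E} (hX : ∀ i, μ.map (X i) = ν) {e : ι → ℕ}
    (he : ∀ r : ℝ, 0 ≤ r → r < 1 → Summable fun i => r ^ e i) :
    ∀ᵐ ω ∂μ, ∀ r : ℝ, 0 ≤ r → r < 1 → Summable fun i => ‖X i ω‖ * r ^ e i := by
  have hr0 (k : ℕ) : 0 ≤ 1 - 1 / (k + 1 : ℝ) :=
    sub_nonneg.mpr (div_le_one_of_le₀ (by simp) (by positivity))
  have hr1 (k : ℕ) : 1 - 1 / (k + 1 : ℝ) < 1 := sub_lt_self _ (by positivity)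
  filter_upwards [ae_all_iff.mpr fun k => ae_summable_norm_mul_of_map_eq hν hX
    (fun i => pow_nonneg (hr0 k) _) (he _ (hr0 k) (hr1 k))] with ω hω r hr0 hr1
  exact summable_mul_pow_of_forall_nat (fun _ => norm_nonneg _) hω hr0 hr1

end SummableMajorant

theorem summable_pow_mul_succ {r : ℝ} (hr0 : 0 ≤ r) (hr1 : r < 1) :
    Summable fun p : ℕ × ℕ => r ^ ((p.1 + 1) * (p.2 + 1)) := by
  have hgeom := summable_geometric_of_lt_one hr0 hr1
  refine (hgeom.mul_of_nonneg hgeom (fun n => by positivity) fun n => by positivity)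
    |>.of_nonneg_of_le (fun p => by positivity) fun p => ?_
  rw [← pow_add]
  exact pow_le_pow_of_le_one hr0 hr1.le (by nlinarith)

theorem norm_two_div_sqrt_succ_mul_le (n : ℕ) (a b θ : ℝ) :
    ‖(2 : ℂ) / (Real.sqrt (n + 1) : ℂ) * ((a : ℂ) * Real.cos θ + (b : ℂ) * Real.sin θ)‖ ≤
      2 * (|a| + |b|) := by
  have hsqrt : 1 ≤ Real.sqrt (n + 1) :=
    Real.one_le_sqrt.mpr (by linarith [n.cast_nonneg (α := ℝ)])
  have htrig : ‖(a : ℂ) * Real.cos θ + (b : ℂ) * Real.sin θ‖ ≤ |a| + |b| := by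
    refine (norm_add_le _ _).trans ?_
    simp only [norm_mul, Complex.norm_real, Real.norm_eq_abs]
    gcongr
    · exact mul_le_of_le_one_right (abs_nonneg a) (abs_cos_le_one θ)
    · exact mul_le_of_le_one_right (abs_nonneg b) (abs_sin_le_one θ)
  rw [norm_mul, norm_div, Complex.norm_real, Real.norm_of_nonneg (Real.sqrt_nonneg _)]
  gcongr
  simpa using div_le_self zero_le_two hsqrt

theorem summable_norm_two_div_sqrt_succ_mul {ι : Type*} {n : ι → ℕ} {a b θ w : ι → ℝ}
    (hw : ∀ i, 0 ≤ w i) (ha : Summable fun i => ‖a i‖ * w i)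
    (hb : Summable fun i => ‖b i‖ * w i) :
    Summable fun i => ‖(2 : ℂ) / (Real.sqrt (n i + 1) : ℂ) *
      ((a i : ℂ) * Real.cos (θ i) + (b i : ℂ) * Real.sin (θ i))‖ * w i := by
  refine ((ha.add hb).mul_left 2).of_nonneg_of_le (fun i => mul_nonneg (norm_nonneg _) (hw i))
    fun i => ?_
  calc _ ≤ 2 * (|a i| + |b i|) * w i := by
        gcongr
        · exact hw i
        · exact norm_two_div_sqrt_succ_mul_le _ _ _ _
    _ = _ := by simp only [Real.norm_eq_abs]; ring

theorem gaussian_series_ae_analytic_general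
    {Ω : Type*} [MeasurableSpace Ω] (μ : Measure Ω) [IsProbabilityMeasure μ]
    (A B : ℕ → ℕ → Ω → ℝ)
    (hAlaw : ∀ n m, μ.map (A n m) = gaussianReal 0 1)
    (hBlaw : ∀ n m, μ.map (B n m) = gaussianReal 0 1) :
    ∀ᵐ ω ∂μ,
      (∀ x ∈ Set.Icc (0 : ℝ) 1, ∀ q ∈ ball (0 : ℂ) 1,
        Summable (fun p : ℕ × ℕ =>
          ‖(2 : ℂ) * q ^ ((p.1 + 1) * (p.2 + 1)) / (Real.sqrt (p.1 + 1) : ℂ) *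
            (((A p.1 p.2 ω : ℝ) : ℂ) * Real.cos (2 * π * (p.1 + 1) * x) +
              ((B p.1 p.2 ω : ℝ) : ℂ) * Real.sin (2 * π * (p.1 + 1) * x))‖)) ∧
      ∀ x ∈ Set.Icc (0 : ℝ) 1,
        AnalyticOnNhd ℂ (fun q : ℂ => ∑' p : ℕ × ℕ,
          (2 : ℂ) * q ^ ((p.1 + 1) * (p.2 + 1)) / (Real.sqrt (p.1 + 1) : ℂ) *
            (((A p.1 p.2 ω : ℝ) : ℂ) * Real.cos (2 * π * (p.1 + 1) * x) +
              ((B p.1 p.2 ω : ℝ) : ℂ) * Real.sin (2 * π * (p.1 + 1) * x)))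
          (ball 0 1) := by
  have hgauss : Integrable id (gaussianReal 0 1) :=
    memLp_one_iff_integrable.mp (memLp_id_gaussianReal 1)
  have he (r : ℝ) (hr0 : 0 ≤ r) (hr1 : r < 1) := summable_pow_mul_succ hr0 hr1
  filter_upwards [ae_forall_summable_norm_mul_pow hgauss (X := fun p : ℕ × ℕ => A p.1 p.2)
      (fun p => hAlaw p.1 p.2) he,
    ae_forall_summable_norm_mul_pow hgauss (X := fun p : ℕ × ℕ => B p.1 p.2)
      (fun p => hBlaw p.1 p.2) he] with ω hA hB
  have hcoeff (x r : ℝ) (hr0 : 0 ≤ r) (hr1 : r < 1) :=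
    summable_norm_two_div_sqrt_succ_mul (n := Prod.fst) (θ := fun p => 2 * π * (p.1 + 1) * x)
      (fun _ => pow_nonneg hr0 _) (hA r hr0 hr1) (hB r hr0 hr1)
  refine ⟨fun x _ q hq => ?_, fun x _ => ?_⟩
  · convert hcoeff x ‖q‖ (norm_nonneg q) (mem_ball_zero_iff.mp hq) using 2 with p
    rw [← norm_pow, ← norm_mul]
    congr 1
    ring
  · convert analyticOnNhd_tsum_mul_pow (hcoeff x) using 1
    exact funext fun q => tsum_congr fun p => by ring

/-- Lemma 2.3 (lem:F): given a jointly independent family of standard Gaussians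
`(α_{n,m})_{n,m≥1}`, `(β_{n,m})_{n,m≥1}` (here `A i j` stands for `α_{i+1,j+1}` and
`B i j` for `β_{i+1,j+1}`), almost surely the series
`F_x(q) = 2 Σ_{n,m≥1} (q^{nm}/√n)(α_{n,m} cos(2πnx) + β_{n,m} sin(2πnx))`
converges absolutely for all `x ∈ [0,1]` and `q` in the open unit disc, and for each
`x ∈ [0,1]` the function `q ↦ F_x(q)` is analytic on the open unit disc. -/
theorem gaussian_series_ae_analytic
    {Ω : Type*} [MeasurableSpace Ω] (μ : Measure Ω) [IsProbabilityMeasure μ]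
    (A B : ℕ → ℕ → Ω → ℝ)
    (hAmeas : ∀ n m, Measurable (A n m)) (hBmeas : ∀ n m, Measurable (B n m))
    (hindep : iIndepFun
      (fun i : (ℕ × ℕ) ⊕ (ℕ × ℕ) =>
        Sum.elim (fun p : ℕ × ℕ => A p.1 p.2) (fun p : ℕ × ℕ => B p.1 p.2) i) μ)
    (hAlaw : ∀ n m, μ.map (A n m) = gaussianReal 0 1)
    (hBlaw : ∀ n m, μ.map (B n m) = gaussianReal 0 1) :
    ∀ᵐ ω ∂μ,
      (∀ x ∈ Set.Icc (0 : ℝ) 1, ∀ q ∈ ball (0 : ℂ) 1,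
        Summable (fun p : ℕ × ℕ =>
          ‖(2 : ℂ) * q ^ ((p.1 + 1) * (p.2 + 1)) / (Real.sqrt (p.1 + 1) : ℂ) *
            (((A p.1 p.2 ω : ℝ) : ℂ) * Real.cos (2 * π * (p.1 + 1) * x) +
              ((B p.1 p.2 ω : ℝ) : ℂ) * Real.sin (2 * π * (p.1 + 1) * x))‖)) ∧
      ∀ x ∈ Set.Icc (0 : ℝ) 1,
        AnalyticOnNhd ℂ (fun q : ℂ => ∑' p : ℕ × ℕ,
          (2 : ℂ) * q ^ ((p.1 + 1) * (p.2 + 1)) / (Real.sqrt (p.1 + 1) : ℂ) *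
            (((A p.1 p.2 ω : ℝ) : ℂ) * Real.cos (2 * π * (p.1 + 1) * x) +
              ((B p.1 p.2 ω : ℝ) : ℂ) * Real.sin (2 * π * (p.1 + 1) * x)))
          (ball 0 1) :=
  gaussian_series_ae_analytic_general μ A B hAlaw hBlaw
end

section
/- There exists q₀ ∈ (0,1) such that for every q ∈ (0,q₀) and every z ∈ ℂ with 0 < Im z < (3/4)·(−log q)/π, the series Σ_{n=1}^∞ (q^{2n}/(1 − q^{2n}))·sin(2πnz) converges absolutely and Im( π·cos(πz)/sin(πz) + 4π·Σ_{n=1}^∞ (q^{2n}/(1 − q^{2n}))·sin(2πnz) ) < 0. (Note sin(πz) ≠ 0 since Im z > 0.) -/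
open Real Complex

/-!
With `y = Im z`, `r = q² e^{2πy}` and `v = πy`, one has `Im(π cot πz) ≤ -π tanh v`, because
`|sin πz|² = sin² πx + sinh² v ≤ cosh² v`. For the series, `sinh (k t) ≤ k sinh t e^{(k-1)t}` bounds
the imaginary part of the `k`-th term by `2 q² sinh(2v) k r^{k-1}`, so the whole series contributes
at most `16 π q² sinh v cosh v / (1 - r)²`. Its ratio to `π tanh v` is `16 q² cosh² v / (1 - r)² ≤
16 r / (1 - r)²`, and the strip condition gives `r² < q`, so `r` is small once `q` is.
-/

lemma Real.cosh_le_exp_of_nonneg {t : ℝ} (ht : 0 ≤ t) : Real.cosh t ≤ Real.exp t := by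
  rw [← Real.exp_sub_sinh]
  linarith [Real.sinh_nonneg_iff.2 ht]

lemma Real.sinh_succ_mul_le {t : ℝ} (ht : 0 ≤ t) (n : ℕ) :
    Real.sinh ((n + 1) * t) ≤ (n + 1) * Real.sinh t * Real.exp (n * t) := by
  induction n with
  | zero => simp
  | succ n ih =>
    have hsinh : 0 ≤ Real.sinh t := Real.sinh_nonneg_iff.2 ht
    calc Real.sinh ((↑(n + 1) + 1) * t)
        = Real.sinh ((n + 1) * t) * Real.cosh t + Real.cosh ((n + 1) * t) * Real.sinh t := by
          rw [← Real.sinh_add]; push_cast; ring_nf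
      _ ≤ (n + 1) * Real.sinh t * Real.exp (n * t) * Real.exp t
            + Real.exp ((n + 1) * t) * Real.sinh t := by
          gcongr ?_ + ?_
          · exact mul_le_mul ih (Real.cosh_le_exp_of_nonneg ht) (Real.cosh_pos t).le
              (by positivity)
          · exact mul_le_mul_of_nonneg_right (Real.cosh_le_exp_of_nonneg (by positivity)) hsinh
      _ = (↑(n + 1) + 1) * Real.sinh t * Real.exp (↑(n + 1) * t) := by
          rw [mul_assoc _ (Real.exp _), ← Real.exp_add]; push_cast; ring_nf

namespace Complex

lemma re_sin (w : ℂ) : (sin w).re = Real.sin w.re * Real.cosh w.im := by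
  rw [sin_eq]; simp [sin_ofReal_re, cosh_ofReal_re]

lemma im_sin (w : ℂ) : (sin w).im = Real.cos w.re * Real.sinh w.im := by
  rw [sin_eq]; simp [cos_ofReal_re, sinh_ofReal_re]

lemma re_cos (w : ℂ) : (cos w).re = Real.cos w.re * Real.cosh w.im := by
  rw [cos_eq]; simp [cos_ofReal_re, cosh_ofReal_re]

lemma im_cos (w : ℂ) : (cos w).im = -(Real.sin w.re * Real.sinh w.im) := by
  rw [cos_eq]; simp [sin_ofReal_re, sinh_ofReal_re]

lemma normSq_sin (w : ℂ) : normSq (sin w) = Real.sin w.re ^ 2 + Real.sinh w.im ^ 2 := by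
  rw [normSq_apply, re_sin, im_sin]
  linear_combination Real.sin w.re ^ 2 * Real.cosh_sq w.im
    + Real.sinh w.im ^ 2 * Real.sin_sq_add_cos_sq w.re

lemma normSq_sin_le_cosh_sq (w : ℂ) : normSq (sin w) ≤ Real.cosh w.im ^ 2 := by
  rw [normSq_sin, Real.cosh_sq]
  linarith [Real.sin_sq_le_one w.re]

lemma norm_sin_le_cosh_im (w : ℂ) : ‖sin w‖ ≤ Real.cosh w.im := by
  rw [← sq_le_sq₀ (norm_nonneg _) (Real.cosh_pos _).le, ← normSq_eq_norm_sq]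
  exact normSq_sin_le_cosh_sq w

lemma im_cos_div_sin (w : ℂ) :
    (cos w / sin w).im = -(Real.sinh w.im * Real.cosh w.im) / normSq (sin w) := by
  rw [div_im, im_cos, re_cos, re_sin, im_sin, div_sub_div_same]
  congr 1
  linear_combination -(Real.sinh w.im * Real.cosh w.im) * Real.sin_sq_add_cos_sq w.re

lemma im_cos_div_sin_le_neg_tanh {w : ℂ} (hw : 0 < w.im) :
    (cos w / sin w).im ≤ -Real.tanh w.im := by
  have hsinh : 0 < Real.sinh w.im := Real.sinh_pos_iff.2 hw
  have hnormSq : 0 < normSq (sin w) := by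
    rw [normSq_sin]; positivity
  rw [im_cos_div_sin, Real.tanh_eq_sinh_div_cosh, neg_div, neg_le_neg_iff,
    div_le_div_iff₀ (Real.cosh_pos _) hnormSq]
  have := normSq_sin_le_cosh_sq w
  nlinarith

end Complex

lemma div_one_sub_le_two_mul {x : ℝ} (hx₀ : 0 ≤ x) (hx : x ≤ 1 / 2) : x / (1 - x) ≤ 2 * x := by
  rw [div_le_iff₀ (by linarith)]
  nlinarith

noncomputable def thetaLogDerivTerm (q : ℝ) (z : ℂ) (n : ℕ) : ℂ :=
  (q : ℂ) ^ (2 * (n + 1)) / (1 - (q : ℂ) ^ (2 * (n + 1))) *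
    Complex.sin (2 * (π : ℂ) * (n + 1) * z)

lemma thetaLogDerivTerm_eq (q : ℝ) (z : ℂ) (n : ℕ) :
    thetaLogDerivTerm q z n = (((q ^ 2) ^ (n + 1) / (1 - (q ^ 2) ^ (n + 1)) : ℝ) : ℂ) *
      Complex.sin (((2 * π * (n + 1) : ℝ) : ℂ) * z) := by
  rw [thetaLogDerivTerm, ← pow_mul]
  push_cast
  ring_nf

section thetaLogDerivTerm

variable {q : ℝ} {z : ℂ}

lemma norm_thetaLogDerivTerm_le (hq : q ^ 2 ≤ 1 / 2) (hz : 0 ≤ z.im) (n : ℕ) :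
    ‖thetaLogDerivTerm q z n‖ ≤ 2 * (q ^ 2 * Real.exp (2 * π * z.im)) ^ (n + 1) := by
  have hqn : (q ^ 2) ^ (n + 1) ≤ 1 / 2 := (pow_le_of_le_one (by positivity) (by linarith)
    n.succ_ne_zero).trans hq
  rw [thetaLogDerivTerm_eq, norm_mul, norm_real, Real.norm_of_nonneg
    (div_nonneg (by positivity) (by linarith))]
  calc (q ^ 2) ^ (n + 1) / (1 - (q ^ 2) ^ (n + 1)) *
        ‖Complex.sin (((2 * π * (n + 1) : ℝ) : ℂ) * z)‖
      ≤ 2 * (q ^ 2) ^ (n + 1) * Real.exp (2 * π * (n + 1) * z.im) := by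
        gcongr
        · exact div_one_sub_le_two_mul (by positivity) hqn
        · refine (norm_sin_le_cosh_im _).trans ?_
          rw [im_ofReal_mul]
          exact Real.cosh_le_exp_of_nonneg (by positivity)
    _ = 2 * (q ^ 2 * Real.exp (2 * π * z.im)) ^ (n + 1) := by
        rw [mul_pow, ← Real.exp_nat_mul]
        push_cast
        ring_nf

lemma im_thetaLogDerivTerm_le (hq : q ^ 2 ≤ 1 / 2) (hz : 0 ≤ z.im) (n : ℕ) :
    (thetaLogDerivTerm q z n).im ≤
      2 * q ^ 2 * Real.sinh (2 * π * z.im) *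
        ((n + 1) * (q ^ 2 * Real.exp (2 * π * z.im)) ^ n) := by
  have hqn : (q ^ 2) ^ (n + 1) ≤ 1 / 2 := (pow_le_of_le_one (by positivity) (by linarith)
    n.succ_ne_zero).trans hq
  have ht : 0 ≤ 2 * π * z.im := by positivity
  rw [thetaLogDerivTerm_eq, im_ofReal_mul, im_sin, re_ofReal_mul, im_ofReal_mul]
  have hc : 0 ≤ (q ^ 2) ^ (n + 1) / (1 - (q ^ 2) ^ (n + 1)) :=
    div_nonneg (by positivity) (by linarith)
  have hsinh : 0 ≤ Real.sinh (2 * π * (n + 1) * z.im) := Real.sinh_nonneg_iff.2 (by positivity)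
  calc (q ^ 2) ^ (n + 1) / (1 - (q ^ 2) ^ (n + 1)) *
        (Real.cos (2 * π * (n + 1) * z.re) * Real.sinh (2 * π * (n + 1) * z.im))
      ≤ (q ^ 2) ^ (n + 1) / (1 - (q ^ 2) ^ (n + 1)) * Real.sinh (2 * π * (n + 1) * z.im) :=
        mul_le_mul_of_nonneg_left (mul_le_of_le_one_left hsinh (Real.cos_le_one _)) hc
    _ ≤ 2 * (q ^ 2) ^ (n + 1) *
          ((n + 1) * Real.sinh (2 * π * z.im) * Real.exp (n * (2 * π * z.im))) := by
        rw [show 2 * π * (n + 1) * z.im = (n + 1) * (2 * π * z.im) by ring] at hsinh ⊢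
        exact mul_le_mul (div_one_sub_le_two_mul (by positivity) hqn)
          (Real.sinh_succ_mul_le ht n) hsinh (by positivity)
    _ = 2 * q ^ 2 * Real.sinh (2 * π * z.im) *
          ((n + 1) * (q ^ 2 * Real.exp (2 * π * z.im)) ^ n) := by
        rw [Real.exp_nat_mul]
        ring

lemma summable_norm_thetaLogDerivTerm (hq : q ^ 2 ≤ 1 / 2) (hz : 0 ≤ z.im)
    (hr : q ^ 2 * Real.exp (2 * π * z.im) < 1) :
    Summable fun n ↦ ‖thetaLogDerivTerm q z n‖ :=
  .of_nonneg_of_le (fun _ ↦ norm_nonneg _) (norm_thetaLogDerivTerm_le hq hz)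
    (((summable_geometric_of_lt_one (by positivity) hr).comp_injective
      (add_left_injective 1)).mul_left 2)

lemma im_tsum_thetaLogDerivTerm_le (hq : q ^ 2 ≤ 1 / 2) (hz : 0 ≤ z.im)
    (hr : q ^ 2 * Real.exp (2 * π * z.im) < 1) :
    (∑' n, thetaLogDerivTerm q z n).im ≤
      2 * q ^ 2 * Real.sinh (2 * π * z.im) / (1 - q ^ 2 * Real.exp (2 * π * z.im)) ^ 2 := by
  set r := q ^ 2 * Real.exp (2 * π * z.im)
  have hgeom : HasSum (fun n : ℕ ↦ (n + 1) * r ^ n) (1 / (1 - r) ^ 2) := by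
    simpa using hasSum_choose_mul_geometric_of_norm_lt_one 1
      (by rwa [Real.norm_of_nonneg (by positivity)] : ‖r‖ < 1)
  have hsum := (summable_norm_thetaLogDerivTerm hq hz hr).of_norm
  rw [div_eq_mul_one_div]
  exact hasSum_le (im_thetaLogDerivTerm_le hq hz) (hasSum_im hsum.hasSum)
    (hgeom.mul_left _)

lemma im_pi_cot_add_four_pi_tsum_thetaLogDerivTerm_neg (hz : 0 < z.im) (hq : q ^ 2 ≤ 1 / 2)
    (hr : q ^ 2 * Real.exp (2 * π * z.im) < 1)
    (hr' : 16 * (q ^ 2 * Real.exp (2 * π * z.im)) < (1 - q ^ 2 * Real.exp (2 * π * z.im)) ^ 2) :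
    ((π : ℂ) * Complex.cos ((π : ℂ) * z) / Complex.sin ((π : ℂ) * z) +
      4 * (π : ℂ) * ∑' n, thetaLogDerivTerm q z n).im < 0 := by
  set r := q ^ 2 * Real.exp (2 * π * z.im)
  set v := π * z.im
  have hv : 0 < v := by positivity
  have hcot : ((π : ℂ) * Complex.cos ((π : ℂ) * z) / Complex.sin ((π : ℂ) * z)).im
      ≤ -(π * Real.tanh v) := by
    rw [mul_div_assoc, im_ofReal_mul, ← mul_neg]
    gcongr
    simpa only [im_ofReal_mul] using im_cos_div_sin_le_neg_tanh (w := π * z) (by simpa)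
  have hseries : (4 * (π : ℂ) * ∑' n, thetaLogDerivTerm q z n).im
      ≤ π * Real.tanh v * (16 * (q ^ 2 * Real.cosh v ^ 2) / (1 - r) ^ 2) := by
    have h : (∑' n, thetaLogDerivTerm q z n).im
        ≤ 2 * q ^ 2 * (2 * Real.sinh v * Real.cosh v) / (1 - r) ^ 2 := by
      rw [← Real.sinh_two_mul]
      convert im_tsum_thetaLogDerivTerm_le hq hz.le hr using 4
      ring
    rw [show 4 * (π : ℂ) = ((4 * π : ℝ) : ℂ) by push_cast; ring, im_ofReal_mul,
      Real.tanh_eq_sinh_div_cosh]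
    calc 4 * π * (∑' n, thetaLogDerivTerm q z n).im
        ≤ 4 * π * (2 * q ^ 2 * (2 * Real.sinh v * Real.cosh v) / (1 - r) ^ 2) := by gcongr
      _ = _ := by field_simp; ring
  have hcosh : q ^ 2 * Real.cosh v ^ 2 ≤ r := by
    calc q ^ 2 * Real.cosh v ^ 2 ≤ q ^ 2 * Real.exp v ^ 2 := by
          gcongr; exact Real.cosh_le_exp_of_nonneg hv.le
      _ = r := by rw [← Real.exp_nat_mul]; simp only [r, v]; push_cast; ring_nf
  have hratio : 16 * (q ^ 2 * Real.cosh v ^ 2) / (1 - r) ^ 2 < 1 :=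
    (div_lt_one (by nlinarith)).2 (by linarith)
  have htanh : 0 < π * Real.tanh v := by
    rw [Real.tanh_eq_sinh_div_cosh]
    exact mul_pos pi_pos (div_pos (Real.sinh_pos_iff.2 hv) (Real.cosh_pos v))
  rw [add_im]
  nlinarith

end thetaLogDerivTerm

lemma sq_mul_exp_sq_lt_self {q y : ℝ} (hq : 0 < q) (hy : y < 3 / 4 * (-Real.log q) / π) :
    (q ^ 2 * Real.exp (2 * π * y)) ^ 2 < q := by
  have hy' : 4 * π * y < 3 * -Real.log q := by
    rw [lt_div_iff₀ pi_pos] at hy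
    linarith
  calc (q ^ 2 * Real.exp (2 * π * y)) ^ 2 = q ^ 4 * Real.exp (4 * π * y) := by
        rw [mul_pow, ← Real.exp_nat_mul]; push_cast; ring_nf
    _ < q ^ 4 * Real.exp (3 * -Real.log q) := by gcongr
    _ = q := by
        rw [show (3 : ℝ) = (3 : ℕ) by norm_num, Real.exp_nat_mul, Real.exp_neg,
          Real.exp_log hq]
        field_simp

/-- Lemma B.5 (lem:g): there exists `q₀ ∈ (0,1)` such that for all `q ∈ (0,q₀)` and
all `z` in the strip `0 < Im z < (3/4)·(−log q)/π`, the logarithmic derivative of the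
Jacobi theta function, `π cot(πz) + 4π Σ_{n≥1} q^{2n}/(1−q^{2n}) sin(2πnz)`, has negative
imaginary part (the series converging absolutely). -/
theorem exists_q0_theta_log_deriv_im_neg :
    ∃ q₀ ∈ Set.Ioo (0 : ℝ) 1, ∀ q ∈ Set.Ioo (0 : ℝ) q₀, ∀ z : ℂ,
      0 < z.im → z.im < 3 / 4 * (-Real.log q) / π →
      Summable (fun n : ℕ => ‖
        (q : ℂ) ^ (2 * (n + 1)) / (1 - (q : ℂ) ^ (2 * (n + 1))) *
          Complex.sin (2 * (π : ℂ) * (n + 1) * z)‖) ∧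
      ((π : ℂ) * Complex.cos ((π : ℂ) * z) / Complex.sin ((π : ℂ) * z) +
          4 * (π : ℂ) * ∑' n : ℕ,
            (q : ℂ) ^ (2 * (n + 1)) / (1 - (q : ℂ) ^ (2 * (n + 1))) *
              Complex.sin (2 * (π : ℂ) * (n + 1) * z)).im < 0 := by
  refine ⟨1 / 10000, by norm_num, fun q ⟨hq₀, hq⟩ z hz hz' ↦ ?_⟩
  have hr := sq_mul_exp_sq_lt_self hq₀ hz'
  have hr₀ : 0 < q ^ 2 * Real.exp (2 * π * z.im) := by positivity
  have hr₁ : q ^ 2 * Real.exp (2 * π * z.im) < 1 / 100 := by nlinarith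
  have hq₂ : q ^ 2 ≤ 1 / 2 := by nlinarith
  exact ⟨summable_norm_thetaLogDerivTerm hq₂ hz.le (by linarith),
    im_pi_cot_add_four_pi_tsum_thetaLogDerivTerm_neg hz hq₂ (by linarith) (by nlinarith)⟩
end

section
/- For all real numbers a, b with 0 < b < a < 1, the function x ↦ x^{−a}·((1+x)^b − x^b) is Lebesgue integrable on (0, ∞) and ∫₀^∞ x^{−a}·((1+x)^b − x^b) dx = Γ(1−a)·Γ(a−b−1)/Γ(−b), where Γ denotes the real Gamma function (extended by its standard meromorphic continuation; note that a−b−1 ∈ (−1,0) and −b ∈ (−1,0) are not poles of Γ). -/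
open Real MeasureTheory Set ProbabilityTheory

/-!
Write `(1 + x)^b - x^b = b ∫₀¹ (x + t)^(b-1) dt` and swap the integrals. After the substitution
`u = x / (x + t)` the inner integral `∫₀^∞ x^(-a) (x + t)^(b-1) dx` is the Beta integral
`t^(b-a) B(1 - a, a - b)`, and `∫₀¹ b t^(b-a) dt = b / (b - a + 1)`. The recurrence
`Γ(s + 1) = s Γ(s)` at `s = a - b - 1` and `s = -b` turns `b B(1 - a, a - b) / (b - a + 1)` into
`Γ(1 - a) Γ(a - b - 1) / Γ(-b)`.
-/

lemma integral_Ioo_rpow_mul_one_sub_rpow {p q : ℝ} (hp : 0 < p) (hq : 0 < q) :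
    ∫ u in Ioo (0 : ℝ) 1, u ^ (p - 1) * (1 - u) ^ (q - 1) = beta p q := by
  have hβ : Complex.betaIntegral p q =
      ↑(∫ u in Ioo (0 : ℝ) 1, u ^ (p - 1) * (1 - u) ^ (q - 1)) := by
    rw [Complex.betaIntegral, intervalIntegral.integral_of_le zero_le_one,
      integral_Ioc_eq_integral_Ioo, ← integral_complex_ofReal]
    refine setIntegral_congr_fun measurableSet_Ioo fun u hu => ?_
    push_cast [Complex.ofReal_cpow hu.1.le, Complex.ofReal_cpow (sub_nonneg.2 hu.2.le)]
    rfl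
  have h := Complex.Gamma_mul_Gamma_eq_betaIntegral (s := p) (t := q) (by simpa) (by simpa)
  rw [hβ, ← Complex.ofReal_add, Complex.Gamma_ofReal, Complex.Gamma_ofReal,
    Complex.Gamma_ofReal] at h
  rw [beta, eq_div_iff (Gamma_pos_of_pos (add_pos hp hq)).ne', mul_comm]
  exact_mod_cast h.symm

section Substitution

variable {t : ℝ}

lemma image_div_add_Ioi (ht : 0 < t) : (fun x : ℝ => x / (x + t)) '' Ioi 0 = Ioo 0 1 := by
  ext u
  constructor
  · rintro ⟨x, hx : 0 < x, rfl⟩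
    exact ⟨by positivity, (div_lt_one (by positivity)).2 (by linarith)⟩
  · rintro ⟨hu0, hu1⟩
    refine ⟨t * u / (1 - u), div_pos (mul_pos ht hu0) (by linarith), ?_⟩
    have : 1 - u ≠ 0 := by linarith
    field_simp
    ring

lemma injOn_div_add (ht : 0 < t) : InjOn (fun x : ℝ => x / (x + t)) (Ioi 0) := by
  intro x (hx : 0 < x) y (hy : 0 < y) h
  rw [div_eq_div_iff (by positivity) (by positivity)] at h
  exact mul_right_cancel₀ ht.ne' (by linarith)

lemma hasDerivAt_div_add {x : ℝ} (hx : x + t ≠ 0) :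
    HasDerivAt (fun x : ℝ => x / (x + t)) (t / (x + t) ^ 2) x :=
  ((hasDerivAt_id' x).div ((hasDerivAt_id' x).add_const t) hx).congr_deriv (by ring)

lemma integral_Ioi_rpow_mul_add_rpow {p q : ℝ} (hp : 0 < p) (hq : 0 < q) (ht : 0 < t) :
    ∫ x in Ioi (0 : ℝ), x ^ (p - 1) * (x + t) ^ (-(p + q)) =
      t ^ (-q) * beta p q := by
  rw [← integral_Ioo_rpow_mul_one_sub_rpow hp hq, ← image_div_add_Ioi ht,
    integral_image_eq_integral_abs_deriv_smul measurableSet_Ioi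
      (fun x (hx : 0 < x) => (hasDerivAt_div_add (by positivity)).hasDerivWithinAt)
      (injOn_div_add ht), ← integral_const_mul]
  refine setIntegral_congr_fun measurableSet_Ioi fun x (hx : 0 < x) => ?_
  have hs : 0 < x + t := by positivity
  rw [one_sub_div hs.ne', add_sub_cancel_left, smul_eq_mul, abs_of_pos (by positivity),
    div_rpow hx.le hs.le, div_rpow ht.le hs.le, rpow_neg ht.le, rpow_neg hs.le, rpow_add hs,
    rpow_sub_one hs.ne' p, rpow_sub_one hs.ne' q, rpow_sub_one ht.ne' q]
  field_simp

end Substitution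

lemma one_add_rpow_sub_rpow_eq_mul_integral {x : ℝ} (hx : 0 < x) (b : ℝ) :
    (1 + x) ^ b - x ^ b = b * ∫ t in Ioo (0 : ℝ) 1, (x + t) ^ (b - 1) := by
  have hne : ∀ t ∈ uIcc (0 : ℝ) 1, x + t ≠ 0 := fun t ht => by
    rw [uIcc_of_le zero_le_one] at ht
    linarith [ht.1]
  have hderiv : ∀ t ∈ uIcc (0 : ℝ) 1,
      HasDerivAt (fun t => (x + t) ^ b) (b * (x + t) ^ (b - 1)) t := fun t ht =>
    (((hasDerivAt_id' t).const_add x).rpow_const (Or.inl (hne t ht))).congr_deriv (by rw [one_mul])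
  have hcont : ContinuousOn (fun t => b * (x + t) ^ (b - 1)) (uIcc 0 1) :=
    continuousOn_const.mul ((continuousOn_const.add continuousOn_id).rpow_const
      fun t ht => Or.inl (hne t ht))
  rw [← integral_const_mul, ← integral_Ioc_eq_integral_Ioo,
    ← intervalIntegral.integral_of_le zero_le_one,
    intervalIntegral.integral_eq_sub_of_hasDerivAt hderiv hcont.intervalIntegrable, add_zero, add_comm]

lemma integral_Ioo_zero_one_rpow {r : ℝ} (hr : -1 < r) :
    ∫ t in Ioo (0 : ℝ) 1, t ^ r = 1 / (r + 1) := by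
  rw [← integral_Ioc_eq_integral_Ioo, ← intervalIntegral.integral_of_le zero_le_one,
    integral_rpow (Or.inl hr), one_rpow, zero_rpow (by linarith), sub_zero]

lemma Gamma_add_one_div_Gamma_add_one {s r : ℝ} (hs : s ≠ 0) (hr : r ≠ 0) :
    Gamma (s + 1) / Gamma (r + 1) = s / r * (Gamma s / Gamma r) := by
  rw [Gamma_add_one hs, Gamma_add_one hr, mul_div_mul_comm]

lemma div_mul_beta_eq_Gamma_mul_Gamma_div_Gamma {a b : ℝ} (hb : b ≠ 0) (hab : a - b - 1 ≠ 0) :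
    b / (b - a + 1) * beta (1 - a) (a - b) = Gamma (1 - a) * Gamma (a - b - 1) / Gamma (-b) := by
  have hG := Gamma_add_one_div_Gamma_add_one hab (neg_ne_zero.2 hb)
  rw [sub_add_cancel, neg_add_eq_sub] at hG
  have hcoef : b / (b - a + 1) * ((a - b - 1) / -b) = 1 := by
    field_simp [show b - a + 1 ≠ 0 from fun h => hab (by linarith)]
    ring
  rw [beta, show 1 - a + (a - b) = 1 - b by ring, mul_div_assoc, hG]
  linear_combination Gamma (1 - a) * (Gamma (a - b - 1) / Gamma (-b)) * hcoef

section Kernel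

variable {a b t : ℝ}

lemma integral_Ioi_rpow_neg_mul_add_rpow (ha : a < 1) (hba : b < a) (ht : 0 < t) :
    ∫ x in Ioi (0 : ℝ), x ^ (-a) * (x + t) ^ (b - 1) = t ^ (b - a) * beta (1 - a) (a - b) := by
  have h := integral_Ioi_rpow_mul_add_rpow (sub_pos.2 ha) (sub_pos.2 hba) ht
  rwa [sub_sub_cancel_left, show -(1 - a + (a - b)) = b - 1 by ring, neg_sub] at h

lemma integrable_rpow_neg_mul_add_rpow (ha : a < 1) (hba : b < a) (hab : a - 1 < b) :
    Integrable (Function.uncurry fun x t : ℝ => x ^ (-a) * (x + t) ^ (b - 1))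
      ((volume.restrict (Ioi 0)).prod (volume.restrict (Ioo 0 1))) := by
  -- A nonzero integral is never the junk value, so each evaluation below also gives integrability.
  have hC := beta_pos (sub_pos.2 ha) (sub_pos.2 hba)
  rw [integrable_prod_iff' (by fun_prop)]
  refine ⟨?_, ?_⟩
  · filter_upwards [ae_restrict_mem measurableSet_Ioo] with t ⟨ht, _⟩
    refine Integrable.of_integral_ne_zero (f := fun x => x ^ (-a) * (x + t) ^ (b - 1)) ?_
    rw [integral_Ioi_rpow_neg_mul_add_rpow ha hba ht]
    positivity
  · have hpow : IntegrableOn (fun t : ℝ => t ^ (b - a)) (Ioo 0 1) :=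
      Integrable.of_integral_ne_zero (by
        rw [integral_Ioo_zero_one_rpow (by linarith)]
        exact one_div_ne_zero (by linarith))
    refine (hpow.mul_const (beta (1 - a) (a - b))).congr ?_
    filter_upwards [ae_restrict_mem measurableSet_Ioo] with t ⟨ht, _⟩
    rw [← integral_Ioi_rpow_neg_mul_add_rpow ha hba ht]
    refine setIntegral_congr_fun measurableSet_Ioi fun x (hx : 0 < x) => ?_
    exact (norm_of_nonneg (by positivity)).symm

end Kernel

/-- The beta-type integral `∫₀^∞ x^{−a}((1+x)^b − x^b) dx = Γ(1−a)Γ(a−b−1)/Γ(−b)`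
for `0 < b < a < 1`, used in the proof of the OPE Lemma 5.6 (lem:ope1). -/
theorem integral_rpow_one_add_rpow_sub_rpow {a b : ℝ}
    (hb : 0 < b) (hba : b < a) (ha : a < 1) :
    IntegrableOn (fun x : ℝ => x ^ (-a) * ((1 + x) ^ b - x ^ b)) (Ioi 0) ∧
      ∫ x in Ioi (0 : ℝ), x ^ (-a) * ((1 + x) ^ b - x ^ b) =
        Real.Gamma (1 - a) * Real.Gamma (a - b - 1) / Real.Gamma (-b) := by
  have hK := integrable_rpow_neg_mul_add_rpow ha hba (by linarith)
  have hrep : ∀ x ∈ Ioi (0 : ℝ), x ^ (-a) * ((1 + x) ^ b - x ^ b) =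
      b * ∫ t in Ioo (0 : ℝ) 1, x ^ (-a) * (x + t) ^ (b - 1) := fun x hx => by
    rw [one_add_rpow_sub_rpow_eq_mul_integral hx, integral_const_mul]
    ring
  refine ⟨(hK.integral_prod_left.const_mul b).congr ?_, ?_⟩
  · filter_upwards [ae_restrict_mem measurableSet_Ioi] with x hx using (hrep x hx).symm
  calc ∫ x in Ioi (0 : ℝ), x ^ (-a) * ((1 + x) ^ b - x ^ b)
      = b * ∫ x in Ioi (0 : ℝ), ∫ t in Ioo (0 : ℝ) 1, x ^ (-a) * (x + t) ^ (b - 1) := by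
        rw [← integral_const_mul]
        exact setIntegral_congr_fun measurableSet_Ioi hrep
    _ = b * ∫ t in Ioo (0 : ℝ) 1, ∫ x in Ioi (0 : ℝ), x ^ (-a) * (x + t) ^ (b - 1) := by
        rw [integral_integral_swap hK]
    _ = b * ∫ t in Ioo (0 : ℝ) 1, t ^ (b - a) * beta (1 - a) (a - b) := by
        congr 1
        exact setIntegral_congr_fun measurableSet_Ioo fun t ht =>
          integral_Ioi_rpow_neg_mul_add_rpow ha hba ht.1
    _ = b / (b - a + 1) * beta (1 - a) (a - b) := by
        rw [integral_mul_const, integral_Ioo_zero_one_rpow (by linarith)]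
        ring
    _ = Gamma (1 - a) * Gamma (a - b - 1) / Gamma (-b) :=
        div_mul_beta_eq_Gamma_mul_Gamma_div_Gamma hb.ne' (by linarith)
end
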